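/- (Mathias) If T is an n×n matrix such that both Δ(|T|) and Δ(|T*|) are scalar multiples of the identity, then ‖T‖_m = (1/n)·Tr(|T|). -/

import Mathlib

open scoped ENNReal ComplexOrder Matrix

noncomputable def opNorm2 {m : Type*} [Fintype m] [DecidableEq m] (M : Matrix m m ℂ) : ℝ :=
  ‖Matrix.toEuclideanCLM (𝕜 := ℂ) M‖

noncomputable def schurNorm {m : Type*} [Fintype m] [DecidableEq m] (M : Matrix m m ℂ) : ℝ :=
  ⨆ X : {X : Matrix m m ℂ // opNorm2 X ≤ 1}, opNorm2 (M.hadamard X.1)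

noncomputable def schurNormENN (A : ℕ → ℕ → ℂ) : ℝ≥0∞ :=
  ⨆ n : ℕ, ENNReal.ofReal (schurNorm (Matrix.of fun i j : Fin n => A i j))

noncomputable def schurBound (P : Set (ℕ × ℕ)) : ℝ≥0∞ :=
  ⨆ S : {S : ℕ → ℕ → ℂ //
      (∀ i j, ‖S i j‖ ≤ 1) ∧ ∀ i j, (i, j) ∉ P → S i j = 0},
    schurNormENN S.1

noncomputable def matAbs {m : Type*} [Fintype m] [DecidableEq m] (T : Matrix m m ℂ) :
    Matrix m m ℂ :=
  (Matrix.posSemidef_conjTranspose_mul_self T).1.eigenvectorUnitary *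
    Matrix.diagonal (((↑) : ℝ → ℂ) ∘ (√·) ∘ (Matrix.posSemidef_conjTranspose_mul_self T).1.eigenvalues) *
    (star (Matrix.posSemidef_conjTranspose_mul_self T).1.eigenvectorUnitary : Matrix m m ℂ)

/-!
Let `A = |T|`, `B = |T*|` and `a = Tr A / n`. The polar decomposition `T = W A`, with `W = T A⁺` a
contraction and `W*W` the support projection of `A`, gives `B = W A W*`, hence `Tr B = Tr A`, so
both constant diagonals of `A` and `B` equal `a`.

Upper bound: with `C = A^{1/2}` and `R = W C` we have `T = R C`, every column of `C` has squared
norm `(C*C)ⱼⱼ = Aⱼⱼ = a` and every row of `R` has squared norm `(RR*)ᵢᵢ = Bᵢᵢ = a`. Writing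
`((T ∘ X) x)ᵢ = Σₖ Rᵢₖ (X (Cₖ. ∘ x))ᵢ` and applying Cauchy–Schwarz in `k` bounds `‖T ∘ X‖` by `a ‖X‖`.

Lower bound: `conj W` is a contraction and testing `T ∘ conj W` against the all-ones vector gives
`Σᵢⱼ Tᵢⱼ conj Wᵢⱼ = Tr (T W*) = Tr B = n a`.
-/

open Matrix
open scoped MatrixOrder Matrix.Norms.L2Operator

namespace Matrix

variable {l m n : Type*}

lemma re_conjTranspose_mul_self_apply [Fintype m] (M : Matrix m n ℂ) (j : n) :
    ((Mᴴ * M) j j).re = ∑ k, ‖M k j‖ ^ 2 := by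
  simp only [mul_apply, conjTranspose_apply, Complex.star_def, Complex.conj_mul', Complex.re_sum]
  norm_cast

lemma re_mul_conjTranspose_self_apply [Fintype n] (M : Matrix m n ℂ) (i : m) :
    ((M * Mᴴ) i i).re = ∑ k, ‖M i k‖ ^ 2 := by
  simpa using re_conjTranspose_mul_self_apply Mᴴ i

lemma apply_self_eq_trace_div [Fintype m] {M : Matrix m m ℂ} {c : ℂ} (hc : ∀ i, M i i = c)
    (i : m) : M i i = M.trace / Fintype.card m := by
  have : Nonempty m := ⟨i⟩
  have htr : M.trace = Fintype.card m * c := by simp [trace, hc]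
  rw [htr, hc i, mul_div_cancel_left₀ _ (Nat.cast_ne_zero.2 Fintype.card_ne_zero)]

variable [Fintype l] [Fintype m] [Fintype n]

lemma mul_eq_self_of_conjTranspose_mul_self_eq [DecidableEq m] {T : Matrix l m ℂ}
    {S : Matrix n m ℂ} {Q : Matrix m m ℂ} (h : Tᴴ * T = Sᴴ * S) (hQ : S * Q = S) : T * Q = T := by
  have hS : S * (1 - Q) = 0 := by rw [Matrix.mul_sub, hQ, Matrix.mul_one, sub_self]
  have hT : (T * (1 - Q))ᴴ * (T * (1 - Q)) = 0 := by
    rw [conjTranspose_mul, Matrix.mul_assoc, ← Matrix.mul_assoc Tᴴ, h, Matrix.mul_assoc, hS]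
    simp
  have := conjTranspose_mul_self_eq_zero.mp hT
  rw [Matrix.mul_sub, Matrix.mul_one, sub_eq_zero] at this
  exact this.symm

lemma sum_norm_mulVec_sq_le [DecidableEq n] (M : Matrix m n ℂ) (x : n → ℂ) :
    ∑ i, ‖(M *ᵥ x) i‖ ^ 2 ≤ ‖M‖ ^ 2 * ∑ j, ‖x j‖ ^ 2 := by
  have h := M.l2_opNorm_mulVec (WithLp.toLp 2 x)
  rw [← sq_le_sq₀ (norm_nonneg _) (by positivity), mul_pow, EuclideanSpace.norm_sq_eq,
    EuclideanSpace.norm_sq_eq] at h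
  simpa using h

lemma l2_opNorm_le_of_sum_norm_mulVec_sq_le [DecidableEq n] (M : Matrix m n ℂ) {K : ℝ}
    (hK : 0 ≤ K) (h : ∀ x, ∑ i, ‖(M *ᵥ x) i‖ ^ 2 ≤ K ^ 2 * ∑ j, ‖x j‖ ^ 2) : ‖M‖ ≤ K := by
  refine ContinuousLinearMap.opNorm_le_bound _ hK fun x ↦ ?_
  rw [← sq_le_sq₀ (norm_nonneg _) (by positivity), mul_pow, EuclideanSpace.norm_sq_eq,
    EuclideanSpace.norm_sq_eq]
  simpa using h x

lemma norm_sum_mul_sq_le {ι R : Type*} [Fintype ι] [SeminormedRing R] (a b : ι → R) :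
    ‖∑ i, a i * b i‖ ^ 2 ≤ (∑ i, ‖a i‖ ^ 2) * ∑ i, ‖b i‖ ^ 2 :=
  calc ‖∑ i, a i * b i‖ ^ 2 ≤ (∑ i, ‖a i‖ * ‖b i‖) ^ 2 := by
        gcongr
        exact (norm_sum_le _ _).trans (Finset.sum_le_sum fun i _ ↦ norm_mul_le _ _)
    _ ≤ _ := Finset.sum_mul_sq_le_sq_mul_sq _ _ _

lemma l2_opNorm_map_star_le [DecidableEq n] (M : Matrix m n ℂ) : ‖M.map star‖ ≤ ‖M‖ := by
  refine l2_opNorm_le_of_sum_norm_mulVec_sq_le _ (norm_nonneg _) fun x ↦ ?_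
  have h : ∀ i, (M.map star *ᵥ x) i = star ((M *ᵥ star x) i) := fun i ↦ by
    simp [mulVec, dotProduct]
  simp only [h, norm_star]
  simpa using sum_norm_mulVec_sq_le M (star x)

lemma norm_sum_entries_le [DecidableEq m] (M : Matrix m m ℂ) :
    ‖∑ i, ∑ j, M i j‖ ≤ Fintype.card m * ‖M‖ := by
  have h : ∑ i, ∑ j, M i j = ∑ i, 1 * (M *ᵥ fun _ ↦ 1) i := by simp [mulVec, dotProduct]
  rw [← sq_le_sq₀ (norm_nonneg _) (by positivity), h]
  calc ‖∑ i, 1 * (M *ᵥ fun _ ↦ 1) i‖ ^ 2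
      ≤ (∑ _i : m, ‖(1 : ℂ)‖ ^ 2) * ∑ i, ‖(M *ᵥ fun _ ↦ 1) i‖ ^ 2 := norm_sum_mul_sq_le _ _
    _ ≤ Fintype.card m * (‖M‖ ^ 2 * ∑ _j : m, ‖(1 : ℂ)‖ ^ 2) := by
        gcongr
        · simp
        · exact sum_norm_mulVec_sq_le M _
    _ = (Fintype.card m * ‖M‖) ^ 2 := by simp; ring

lemma re_trace_mul_conjTranspose_le [DecidableEq m] (T W : Matrix m m ℂ) :
    (T * Wᴴ).trace.re ≤ Fintype.card m * ‖T ⊙ W.map star‖ :=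
  calc (T * Wᴴ).trace.re ≤ ‖(T * Wᴴ).trace‖ := Complex.re_le_norm _
    _ = ‖∑ i, ∑ j, (T ⊙ W.map star) i j‖ := by rw [sum_hadamard_eq]; rfl
    _ ≤ _ := norm_sum_entries_le _

theorem l2_opNorm_mul_hadamard_le [DecidableEq m] (R : Matrix l n ℂ) (C : Matrix n m ℂ)
    (X : Matrix l m ℂ) {r c : ℝ} (hr : 0 ≤ r) (hc : 0 ≤ c)
    (hR : ∀ i, ∑ k, ‖R i k‖ ^ 2 ≤ r ^ 2) (hC : ∀ j, ∑ k, ‖C k j‖ ^ 2 ≤ c ^ 2) :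
    ‖(R * C) ⊙ X‖ ≤ r * c * ‖X‖ := by
  refine l2_opNorm_le_of_sum_norm_mulVec_sq_le _ (by positivity) fun x ↦ ?_
  set y : n → l → ℂ := fun k ↦ X *ᵥ fun j ↦ C k j * x j
  have hy : ∀ i, ((R * C) ⊙ X *ᵥ x) i = ∑ k, R i k * y k i := fun i ↦ by
    simp only [y, mulVec, dotProduct, hadamard_apply, mul_apply, Finset.mul_sum, Finset.sum_mul]
    rw [Finset.sum_comm]
    exact Finset.sum_congr rfl fun _ _ ↦ Finset.sum_congr rfl fun _ _ ↦ by ring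
  calc ∑ i, ‖((R * C) ⊙ X *ᵥ x) i‖ ^ 2
      ≤ ∑ i, (∑ k, ‖R i k‖ ^ 2) * ∑ k, ‖y k i‖ ^ 2 := by
        simp only [hy]; exact Finset.sum_le_sum fun i _ ↦ norm_sum_mul_sq_le _ _
    _ ≤ ∑ i, r ^ 2 * ∑ k, ‖y k i‖ ^ 2 := by gcongr with i; exact hR i
    _ = r ^ 2 * ∑ k, ∑ i, ‖y k i‖ ^ 2 := by rw [← Finset.mul_sum, Finset.sum_comm]
    _ ≤ r ^ 2 * ∑ k, ‖X‖ ^ 2 * ∑ j, ‖C k j * x j‖ ^ 2 := by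
        gcongr with k; exact sum_norm_mulVec_sq_le X _
    _ = r ^ 2 * ‖X‖ ^ 2 * ∑ j, (∑ k, ‖C k j‖ ^ 2) * ‖x j‖ ^ 2 := by
        simp only [norm_mul, mul_pow, ← Finset.mul_sum, Finset.sum_mul]
        rw [Finset.sum_comm, mul_assoc]
    _ ≤ r ^ 2 * ‖X‖ ^ 2 * ∑ j, c ^ 2 * ‖x j‖ ^ 2 := by gcongr with j; exact hC j
    _ = (r * c * ‖X‖) ^ 2 * ∑ j, ‖x j‖ ^ 2 := by rw [← Finset.mul_sum]; ring

section Cfc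
variable [DecidableEq m] {A : Matrix m m ℂ}

lemma cfc_mul_cfc (f g : ℝ → ℝ) :
    cfc f A * cfc g A = cfc (fun x ↦ f x * g x) A :=
  (cfc_mul f g A (finite_real_spectrum.continuousOn f) (finite_real_spectrum.continuousOn g)).symm

lemma cfc_mul_self (hA : IsSelfAdjoint A) (f : ℝ → ℝ) :
    cfc f A * A = cfc (fun x ↦ f x * x) A := by
  calc cfc f A * A = cfc f A * cfc (fun x ↦ x) A := by rw [cfc_id' ℝ A]
    _ = _ := cfc_mul_cfc f _

lemma self_mul_cfc (hA : IsSelfAdjoint A) (f : ℝ → ℝ) :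
    A * cfc f A = cfc (fun x ↦ x * f x) A := by
  calc A * cfc f A = cfc (fun x ↦ x) A * cfc f A := by rw [cfc_id' ℝ A]
    _ = _ := cfc_mul_cfc _ f

end Cfc

end Matrix

section MatAbs
variable {m : Type*} [Fintype m] [DecidableEq m]

lemma matAbs_eq_cfcAbs (T : Matrix m m ℂ) : matAbs T = CFC.abs T := by
  have hM := posSemidef_conjTranspose_mul_self T
  rw [CFC.abs, star_eq_conjTranspose, CFC.sqrt_eq_cfc, cfc_nnreal_eq_real _ _ hM.nonneg,
    hM.1.cfc_eq]
  simp only [IsHermitian.cfc, Unitary.conjStarAlgAut_apply, matAbs]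
  congr 3
  funext i
  simp [Real.coe_sqrt, Real.coe_toNNReal', max_eq_left (hM.eigenvalues_nonneg i)]

lemma matAbs_nonneg (T : Matrix m m ℂ) : 0 ≤ matAbs T :=
  matAbs_eq_cfcAbs T ▸ CFC.abs_nonneg T

lemma matAbs_mul_self (T : Matrix m m ℂ) : matAbs T * matAbs T = Tᴴ * T :=
  matAbs_eq_cfcAbs T ▸ CFC.abs_mul_abs T

lemma eq_matAbs_of_mul_self_eq {T Q : Matrix m m ℂ} (hQ : 0 ≤ Q) (h : Q * Q = Tᴴ * T) :
    Q = matAbs T := by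
  rw [matAbs_eq_cfcAbs, CFC.abs]
  exact (CFC.sqrt_unique h hQ).symm

theorem exists_polar_decomposition (T : Matrix m m ℂ) :
    ∃ W : Matrix m m ℂ, ‖W‖ ≤ 1 ∧ W * matAbs T = T ∧ Wᴴ * W * matAbs T = matAbs T := by
  set A := matAbs T
  have hA : IsSelfAdjoint A := (matAbs_nonneg T).isSelfAdjoint
  -- the Moore–Penrose inverse of `A`, since `(0 : ℝ)⁻¹ = 0`
  set A' := cfc (·⁻¹ : ℝ → ℝ) A
  have hA' : A'ᴴ = A' := (cfc_predicate _ A : IsSelfAdjoint A').star_eq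
  have hAA'A : A * (A' * A) = A := by
    rw [cfc_mul_self hA, self_mul_cfc hA]
    conv_rhs => rw [← cfc_id' ℝ A]
    exact cfc_congr fun x _ ↦ by by_cases hx : x = 0 <;> simp [hx]
  set P := cfc (fun x : ℝ ↦ x⁻¹ * x * x * x⁻¹) A
  have hWW : (T * A')ᴴ * (T * A') = P := by
    rw [conjTranspose_mul, hA', Matrix.mul_assoc, ← Matrix.mul_assoc Tᴴ, ← matAbs_mul_self,
      ← Matrix.mul_assoc, ← Matrix.mul_assoc, cfc_mul_self hA, cfc_mul_self hA, cfc_mul_cfc]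
  have hPA : P * A = A := by
    rw [cfc_mul_self hA]
    conv_rhs => rw [← cfc_id' ℝ A]
    exact cfc_congr fun x _ ↦ by by_cases hx : x = 0 <;> simp [hx]
  have hP : IsStarProjection P := by
    refine ⟨?_, cfc_predicate _ A⟩
    rw [IsIdempotentElem, cfc_mul_cfc]
    exact cfc_congr fun x _ ↦ by by_cases hx : x = 0 <;> simp [hx]
  refine ⟨T * A', ?_, ?_, by rw [hWW, hPA]⟩
  · have h := hP.norm_le
    rw [← hWW, l2_opNorm_conjTranspose_mul_self] at h
    nlinarith [norm_nonneg (T * A')]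
  · rw [Matrix.mul_assoc]
    have hAH : Aᴴ = A := hA
    exact mul_eq_self_of_conjTranspose_mul_self_eq (by rw [hAH, matAbs_mul_self]) hAA'A

lemma matAbs_conjTranspose_eq {T W : Matrix m m ℂ} (hWA : W * matAbs T = T)
    (hWWA : Wᴴ * W * matAbs T = matAbs T) : matAbs Tᴴ = W * matAbs T * Wᴴ := by
  have hAH : (matAbs T)ᴴ = matAbs T := (matAbs_nonneg T).isSelfAdjoint
  refine (eq_matAbs_of_mul_self_eq ?_ ?_).symm
  · exact ((nonneg_iff_posSemidef.mp (matAbs_nonneg T)).mul_mul_conjTranspose_same W).nonneg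
  · calc W * matAbs T * Wᴴ * (W * matAbs T * Wᴴ)
        = W * matAbs T * (Wᴴ * W * matAbs T) * Wᴴ := by simp only [Matrix.mul_assoc]
      _ = (W * matAbs T) * (W * matAbs T)ᴴ := by
          rw [hWWA, conjTranspose_mul, hAH]; simp only [Matrix.mul_assoc]
      _ = Tᴴᴴ * Tᴴ := by rw [hWA, conjTranspose_conjTranspose]

lemma trace_matAbs_conjTranspose (T : Matrix m m ℂ) : (matAbs Tᴴ).trace = (matAbs T).trace := by
  obtain ⟨W, -, hWA, hWWA⟩ := exists_polar_decomposition T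
  rw [matAbs_conjTranspose_eq hWA hWWA, trace_mul_cycle, hWWA]

lemma schurNorm_eq_of_forall_le_of_le {M X₀ : Matrix m m ℂ} {K : ℝ}
    (hle : ∀ X : Matrix m m ℂ, ‖X‖ ≤ 1 → ‖M ⊙ X‖ ≤ K) (hX₀ : ‖X₀‖ ≤ 1)
    (hge : K ≤ ‖M ⊙ X₀‖) : schurNorm M = K := by
  have : Nonempty {X : Matrix m m ℂ // opNorm2 X ≤ 1} := ⟨⟨0, by simp [opNorm2]⟩⟩
  refine le_antisymm (ciSup_le fun X ↦ hle X.1 X.2) (hge.trans ?_)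
  exact le_ciSup (f := fun X : {X // opNorm2 X ≤ 1} ↦ opNorm2 (M ⊙ X.1))
    ⟨K, Set.forall_mem_range.2 fun X ↦ hle X.1 X.2⟩ ⟨X₀, hX₀⟩

end MatAbs

theorem stmt_14 {n : ℕ} (hn : 0 < n) (T : Matrix (Fin n) (Fin n) ℂ)
    (h1 : ∃ c : ℂ, ∀ i, matAbs T i i = c)
    (h2 : ∃ c : ℂ, ∀ i, matAbs Tᴴ i i = c) :
    schurNorm T = ((matAbs T).trace).re / n := by
  obtain ⟨c₁, hc₁⟩ := h1
  obtain ⟨c₂, hc₂⟩ := h2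
  set a := (matAbs T).trace.re / n
  obtain ⟨W, hW, hWA, hWWA⟩ := exists_polar_decomposition T
  have hTW : T * Wᴴ = matAbs Tᴴ := by rw [matAbs_conjTranspose_eq hWA hWWA, hWA]
  set C := CFC.sqrt (matAbs T)
  have hCC : C * C = matAbs T := CFC.sqrt_mul_sqrt_self _ (matAbs_nonneg T)
  have hCH : Cᴴ = C := (CFC.sqrt_nonneg _).isSelfAdjoint
  have hcol : ∀ j, ∑ k, ‖C k j‖ ^ 2 = a := fun j ↦ by
    rw [← re_conjTranspose_mul_self_apply, hCH, hCC, apply_self_eq_trace_div hc₁,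
      Fintype.card_fin, Complex.div_natCast_re]
  have hrow : ∀ i, ∑ k, ‖(W * C) i k‖ ^ 2 = a := fun i ↦ by
    have hWC : W * C * (W * C)ᴴ = matAbs Tᴴ := by
      rw [← hTW, ← hWA, conjTranspose_mul, hCH, ← hCC]
      simp only [Matrix.mul_assoc]
    rw [← re_mul_conjTranspose_self_apply, hWC, apply_self_eq_trace_div hc₂,
      trace_matAbs_conjTranspose, Fintype.card_fin, Complex.div_natCast_re]
  have ha : 0 ≤ a := hcol ⟨0, hn⟩ ▸ by positivity
  refine schurNorm_eq_of_forall_le_of_le (fun X hX ↦ ?_) ((l2_opNorm_map_star_le W).trans hW) ?_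
  · have hT : W * C * C = T := by rw [Matrix.mul_assoc, hCC, hWA]
    calc ‖T ⊙ X‖ ≤ √a * √a * ‖X‖ :=
          hT ▸ l2_opNorm_mul_hadamard_le _ _ _ (Real.sqrt_nonneg a) (Real.sqrt_nonneg a)
            (by simp [hrow, Real.sq_sqrt ha]) (by simp [hcol, Real.sq_sqrt ha])
      _ ≤ a := by rw [Real.mul_self_sqrt ha]; exact mul_le_of_le_one_right ha hX
  · have h := re_trace_mul_conjTranspose_le T W
    rw [hTW, trace_matAbs_conjTranspose, Fintype.card_fin] at h
    exact (div_le_iff₀' (by positivity)).2 h
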